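/- arXiv:2511.14822 — 3 statements merged into one kernel-verified Lean document; each statement's English description precedes it below -/
import Mathlib

section
/- (The three universal functionals agree on v-representable densities.) Let ρ ∈ V* be pure-state v-representable, i.e., there exist v ∈ V and a pure ground state Γ of ι(v)+W with ι*(Γ) = ρ. Then F_p(ρ) = Tr(Γ W) and F_e(ρ) = Tr(Γ W); in particular F_p(ρ) = F_e(ρ) and both equal the common value Tr(Γ W) for any such ground state Γ. -/
open Filter Topology

noncomputable section

variable {V H : Type*}
  [AddCommGroup V] [Module ℝ V]
  [NormedAddCommGroup H] [InnerProductSpace ℂ H]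

/-- The real expectation value `⟨ψ, T ψ⟩` of an operator `T` in the vector `ψ`. -/
def expectation (T : H →ₗ[ℂ] H) (ψ : H) : ℝ := (inner ℂ ψ (T ψ) : ℂ).re

/-- The ground state energy of the Hamiltonian `ι v + W`. -/
def energy (ι : V →ₗ[ℝ] (H →ₗ[ℂ] H)) (W : H →ₗ[ℂ] H) (v : V) : ℝ :=
  sInf {r : ℝ | ∃ ψ : H, ‖ψ‖ = 1 ∧ r = expectation (ι v + W) ψ}

/-- The density `ι*(|ψ⟩⟨ψ|)` of the pure state given by the unit vector `ψ`,
as an element of the dual space `V*`. -/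
def pureDensity (ι : V →ₗ[ℝ] (H →ₗ[ℂ] H)) (ψ : H) : Module.Dual ℝ V where
  toFun v := expectation (ι v) ψ
  map_add' v w := by simp [expectation, inner_add_right]
  map_smul' c v := by
    simp only [map_smul, LinearMap.smul_apply, expectation, RingHom.id_apply, smul_eq_mul]
    rw [← algebraMap_smul ℂ c ((ι v) ψ), Complex.coe_algebraMap, inner_smul_right]
    simp

/-- An ensemble state: a positive semidefinite operator of unit trace. -/
def IsEnsembleState (Γ : H →ₗ[ℂ] H) : Prop :=
  Γ.IsSymmetric ∧ (∀ x : H, 0 ≤ (inner ℂ x (Γ x) : ℂ).re) ∧ LinearMap.trace ℂ H Γ = 1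

/-- The density `ι*(Γ)` of a state `Γ`, `v ↦ Tr(Γ ι(v))`, as an element of `V*`. -/
def traceDensity (ι : V →ₗ[ℝ] (H →ₗ[ℂ] H)) (Γ : H →ₗ[ℂ] H) : Module.Dual ℝ V where
  toFun v := (LinearMap.trace ℂ H (ι v ∘ₗ Γ)).re
  map_add' v w := by simp [map_add, LinearMap.add_comp]
  map_smul' c v := by
    simp only [map_smul, RingHom.id_apply, smul_eq_mul]
    rw [← algebraMap_smul ℂ c (ι v), LinearMap.smul_comp, map_smul, Complex.coe_algebraMap]
    simp

/-- The pure (Levy–Lieb) universal functional `F_p`. -/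
def Fp (ι : V →ₗ[ℝ] (H →ₗ[ℂ] H)) (W : H →ₗ[ℂ] H) (ρ : Module.Dual ℝ V) : ℝ :=
  sInf {r : ℝ | ∃ ψ : H, ‖ψ‖ = 1 ∧ pureDensity ι ψ = ρ ∧ r = expectation W ψ}

/-- The ensemble (Lieb/Valone) universal functional `F_e`. -/
def Fe (ι : V →ₗ[ℝ] (H →ₗ[ℂ] H)) (W : H →ₗ[ℂ] H) (ρ : Module.Dual ℝ V) : ℝ :=
  sInf {r : ℝ | ∃ Γ : H →ₗ[ℂ] H, IsEnsembleState Γ ∧ traceDensity ι Γ = ρ ∧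
    r = (LinearMap.trace ℂ H (W ∘ₗ Γ)).re}

/-- The weight space of a functional `α ∈ V*`. -/
def weightSpace (ι : V →ₗ[ℝ] (H →ₗ[ℂ] H)) (α : Module.Dual ℝ V) : Submodule ℂ H where
  carrier := {ψ : H | ∀ v : V, ι v ψ = (α v : ℂ) • ψ}
  add_mem' := by
    intro a b ha hb v
    rw [map_add, ha v, hb v, smul_add]
  zero_mem' := by intro v; simp
  smul_mem' := by
    intro c x hx v
    rw [LinearMap.map_smul, hx v, smul_comm]

/-- The set of weights of an abelian functional theory. -/
def weights (ι : V →ₗ[ℝ] (H →ₗ[ℂ] H)) : Set (Module.Dual ℝ V) :=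
  {α : Module.Dual ℝ V | weightSpace ι α ≠ ⊥}

/-- The derivative of the density map along the set of pure states at `|Ψ⟩⟨Ψ|`,
applied to the tangent vector `φ ⊥ Ψ`: the functional `v ↦ 2 Re⟨φ, ι(v)Ψ⟩`. -/
def derivDensity (ι : V →ₗ[ℝ] (H →ₗ[ℂ] H)) (Ψ φ : H) : Module.Dual ℝ V where
  toFun v := 2 * (inner ℂ φ (ι v Ψ) : ℂ).re
  map_add' v w := by simp [inner_add_right]; ring
  map_smul' c v := by
    simp only [map_smul, LinearMap.smul_apply, RingHom.id_apply, smul_eq_mul]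
    rw [← algebraMap_smul ℂ c ((ι v) Ψ), Complex.coe_algebraMap, inner_smul_right]
    simp; ring

/-- `ρ` is a relative interior point of the convex set `C` (i.e. an interior point
of `C` within its affine span): every point of `C` lies on a segment inside `C`
having `ρ` in its (open) interior. -/
def IsRelInterior {M : Type*} [AddCommGroup M] [Module ℝ M] (C : Set M) (ρ : M) : Prop :=
  ρ ∈ C ∧ ∀ σ ∈ C, ∃ τ ∈ C, ∃ t : ℝ, 0 < t ∧ t < 1 ∧ ρ = t • σ + (1 - t) • τ

/-- Strong orthogonality: componentwise orthogonality in every weight space. -/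
def StronglyOrthogonal [FiniteDimensional ℂ H] (ι : V →ₗ[ℝ] (H →ₗ[ℂ] H)) (Φ Φ' : H) : Prop :=
  ∀ α : Module.Dual ℝ V, weightSpace ι α ≠ ⊥ →
    (inner ℂ ((weightSpace ι α).orthogonalProjectionOnto Φ)
        ((weightSpace ι α).orthogonalProjectionOnto Φ') : ℂ) = 0

/-- The `k`-convex hull of a set. -/
def convk {M : Type*} [AddCommGroup M] [Module ℝ M] (k : ℕ) (X : Set M) : Set M :=
  {ρ : M | ∃ (t : Fin k → ℝ) (x : Fin k → M),
    (∀ i, 0 ≤ t i) ∧ (∑ i, t i) = 1 ∧ (∀ i, x i ∈ X) ∧ (∑ i, t i • x i) = ρ}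

/-- The operator `A ⊗ id` on `H ⊗ ℂᵏ ≅ H ⊕ ⋯ ⊕ H` (k summands). -/
def opBar (k : ℕ) (A : H →ₗ[ℂ] H) :
    (PiLp 2 fun _ : Fin k => H) →ₗ[ℂ] (PiLp 2 fun _ : Fin k => H) where
  toFun x := WithLp.toLp 2 (fun i => A (x i))
  map_add' x y := by ext i; simp [PiLp.add_apply]
  map_smul' c x := by ext i; simp [PiLp.smul_apply]

/-- The potential map `v ↦ ι(v) ⊗ id` of the `k`-convexified functional theory. -/
def potBar (k : ℕ) (ι : V →ₗ[ℝ] (H →ₗ[ℂ] H)) :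
    V →ₗ[ℝ] ((PiLp 2 fun _ : Fin k => H) →ₗ[ℂ] (PiLp 2 fun _ : Fin k => H)) where
  toFun v := opBar k (ι v)
  map_add' v w := by
    apply LinearMap.ext; intro x; ext i
    simp [opBar, map_add]
  map_smul' c v := by
    apply LinearMap.ext; intro x; ext i
    simp [opBar, map_smul]

/-- The subspace of potentials mapped to real multiples of the identity operator. -/
def scalarPart (ι : V →ₗ[ℝ] (H →ₗ[ℂ] H)) : Submodule ℝ V where
  carrier := {v : V | ∃ c : ℝ, ι v = c • (LinearMap.id : H →ₗ[ℂ] H)}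
  add_mem' := by
    rintro a b ⟨c, hc⟩ ⟨d, hd⟩
    exact ⟨c + d, by rw [map_add, hc, hd, add_smul]⟩
  zero_mem' := ⟨0, by simp⟩
  smul_mem' := by
    rintro a v ⟨c, hc⟩
    exact ⟨a * c, by rw [map_smul, hc, smul_smul]⟩

/-! A ground state `ψ` of `ι v + W` minimizes `Tr((ι v + W) Γ)` over all ensemble states `Γ`,
since in an eigenbasis of `Γ` that trace is a convex combination of expectation values of
`ι v + W`. For states with the density of `ψ` the potential part `Tr(ι v Γ)` is fixed, so `ψ`
minimizes `Tr(W Γ)` among them. A pure state `φ` is the ensemble state `|φ⟩⟨φ|`, with the same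
density and the same expectation of `W`, so the pure functional is handled by the same bound. -/

open InnerProductSpace

lemma expectation_add (S T : H →ₗ[ℂ] H) (ψ : H) :
    expectation (S + T) ψ = expectation S ψ + expectation T ψ := by
  simp [expectation]

lemma isEnsembleState_iff {Γ : H →ₗ[ℂ] H} :
    IsEnsembleState Γ ↔ Γ.IsPositive ∧ LinearMap.trace ℂ H Γ = 1 := by
  refine ⟨fun ⟨hsymm, hnonneg, htr⟩ => ⟨⟨hsymm, fun x => ?_⟩, htr⟩,
    fun ⟨hpos, htr⟩ => ⟨hpos.isSymmetric, hpos.re_inner_nonneg_right, htr⟩⟩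
  rw [hsymm x x]
  exact hnonneg x

lemma energy_le_expectation [FiniteDimensional ℂ H] (ι : V →ₗ[ℝ] (H →ₗ[ℂ] H))
    (W : H →ₗ[ℂ] H) (v : V) {φ : H} (hφ : ‖φ‖ = 1) :
    energy ι W v ≤ expectation (ι v + W) φ := by
  have hcont : Continuous (expectation (ι v + W)) := by
    unfold expectation; fun_prop
  refine csInf_le (((isCompact_sphere (0 : H) 1).image hcont).bddBelow.mono ?_) ⟨φ, hφ, rfl⟩
  rintro _ ⟨ψ, hψ, rfl⟩
  exact ⟨ψ, by simpa using hψ, rfl⟩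

lemma trace_comp_rankOne_self [FiniteDimensional ℂ H] (A : H →ₗ[ℂ] H) (ψ : H) :
    LinearMap.trace ℂ H (A ∘ₗ (rankOne ℂ ψ ψ).toLinearMap) = inner ℂ ψ (A ψ) := by
  have : A ∘ₗ (rankOne ℂ ψ ψ).toLinearMap = (rankOne ℂ (A ψ) ψ).toLinearMap := by
    ext x; simp
  rw [this, trace_rankOne]

lemma re_trace_comp_rankOne_self [FiniteDimensional ℂ H] (A : H →ₗ[ℂ] H) (ψ : H) :
    (LinearMap.trace ℂ H (A ∘ₗ (rankOne ℂ ψ ψ).toLinearMap)).re = expectation A ψ := by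
  rw [trace_comp_rankOne_self, expectation]

lemma isEnsembleState_rankOne_self [FiniteDimensional ℂ H] {ψ : H} (hψ : ‖ψ‖ = 1) :
    IsEnsembleState (rankOne ℂ ψ ψ).toLinearMap := by
  refine isEnsembleState_iff.2 ⟨(isPositive_rankOne_self ψ).toLinearMap, ?_⟩
  simpa [inner_self_eq_norm_sq_to_K, hψ] using trace_comp_rankOne_self LinearMap.id ψ

lemma traceDensity_rankOne_self [FiniteDimensional ℂ H] (ι : V →ₗ[ℝ] (H →ₗ[ℂ] H)) (ψ : H) :
    traceDensity ι (rankOne ℂ ψ ψ).toLinearMap = pureDensity ι ψ := by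
  ext v
  exact re_trace_comp_rankOne_self (ι v) ψ

lemma re_trace_comp_eq_sum_eigenvalues_mul_expectation [FiniteDimensional ℂ H] {Γ : H →ₗ[ℂ] H}
    (hΓ : Γ.IsSymmetric) {n : ℕ} (hn : Module.finrank ℂ H = n) (T : H →ₗ[ℂ] H) :
    (LinearMap.trace ℂ H (T ∘ₗ Γ)).re =
      ∑ i, hΓ.eigenvalues hn i * expectation T (hΓ.eigenvectorBasis hn i) := by
  simp [LinearMap.trace_eq_sum_inner _ (hΓ.eigenvectorBasis hn), inner_smul_right_eq_smul,
    expectation]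

lemma IsEnsembleState.le_re_trace_comp [FiniteDimensional ℂ H] {Γ : H →ₗ[ℂ] H}
    (hΓ : IsEnsembleState Γ) (T : H →ₗ[ℂ] H) {E : ℝ}
    (hE : ∀ φ : H, ‖φ‖ = 1 → E ≤ expectation T φ) :
    E ≤ (LinearMap.trace ℂ H (T ∘ₗ Γ)).re := by
  obtain ⟨hpos, htr⟩ := isEnsembleState_iff.1 hΓ
  set b := hpos.isSymmetric.eigenvectorBasis rfl
  set p := hpos.isSymmetric.eigenvalues rfl
  have hsum : ∑ i, p i = 1 := by
    rw [eq_comm]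
    simpa [htr] using hpos.isSymmetric.re_trace_eq_sum_eigenvalues rfl
  calc E = ∑ i, p i * E := by rw [← Finset.sum_mul, hsum, one_mul]
    _ ≤ ∑ i, p i * expectation T (b i) := Finset.sum_le_sum fun i _ =>
      mul_le_mul_of_nonneg_left (hE _ (b.orthonormal.1 i)) (hpos.nonneg_eigenvalues rfl i)
    _ = _ := (re_trace_comp_eq_sum_eigenvalues_mul_expectation _ rfl T).symm

lemma expectation_le_re_trace_comp_of_traceDensity_eq [FiniteDimensional ℂ H]
    {ι : V →ₗ[ℝ] (H →ₗ[ℂ] H)} {W : H →ₗ[ℂ] H} {v : V} {ψ : H}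
    (hg : expectation (ι v + W) ψ = energy ι W v) {Γ : H →ₗ[ℂ] H} (hΓ : IsEnsembleState Γ)
    (hρ : traceDensity ι Γ = pureDensity ι ψ) :
    expectation W ψ ≤ (LinearMap.trace ℂ H (W ∘ₗ Γ)).re := by
  have hmin := hΓ.le_re_trace_comp (ι v + W) fun φ hφ => hg ▸ energy_le_expectation ι W v hφ
  have hpot : (LinearMap.trace ℂ H (ι v ∘ₗ Γ)).re = expectation (ι v) ψ :=
    LinearMap.congr_fun hρ v
  rw [LinearMap.add_comp, map_add, Complex.add_re, hpot, expectation_add] at hmin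
  linarith

theorem functionals_agree_on_vrep_general [FiniteDimensional ℂ H]
    (ι : V →ₗ[ℝ] (H →ₗ[ℂ] H)) (W : H →ₗ[ℂ] H)
    (ρ : Module.Dual ℝ V) (v : V) (ψ : H)
    (hψ : ‖ψ‖ = 1) (hg : expectation (ι v + W) ψ = energy ι W v)
    (hρ : pureDensity ι ψ = ρ) :
    Fp ι W ρ = expectation W ψ ∧ Fe ι W ρ = expectation W ψ := by
  subst hρ
  constructor
  · refine IsLeast.csInf_eq ⟨⟨ψ, hψ, rfl, rfl⟩, ?_⟩
    rintro _ ⟨φ, hφ, hφρ, rfl⟩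
    have := expectation_le_re_trace_comp_of_traceDensity_eq hg (isEnsembleState_rankOne_self hφ)
      (by rw [traceDensity_rankOne_self, hφρ])
    rwa [re_trace_comp_rankOne_self] at this
  · refine IsLeast.csInf_eq ⟨⟨_, isEnsembleState_rankOne_self hψ, traceDensity_rankOne_self ι ψ,
      (re_trace_comp_rankOne_self W ψ).symm⟩, ?_⟩
    rintro _ ⟨Γ, hΓ, hΓρ, rfl⟩
    exact expectation_le_re_trace_comp_of_traceDensity_eq hg hΓ hΓρ

/-- the three universal functionals agree on pure-state
v-representable densities. -/
theorem functionals_agree_on_vrep [FiniteDimensional ℝ V] [FiniteDimensional ℂ H] [Nontrivial H]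
    (ι : V →ₗ[ℝ] (H →ₗ[ℂ] H)) (W : H →ₗ[ℂ] H)
    (hι : ∀ v : V, (ι v).IsSymmetric) (hW : W.IsSymmetric)
    (ρ : Module.Dual ℝ V) (v : V) (ψ : H)
    (hψ : ‖ψ‖ = 1) (hg : expectation (ι v + W) ψ = energy ι W v)
    (hρ : pureDensity ι ψ = ρ) :
    Fp ι W ρ = expectation W ψ ∧ Fe ι W ρ = expectation W ψ :=
  functionals_agree_on_vrep_general ι W ρ v ψ hψ hg hρ

end
end

section
/- (No-Mixing Lemma.) In an abelian functional theory, let ρ* lie in the relative interior of conv(Ω), and let Φ be a unit vector with ι*(|Φ⟩⟨Φ|) = ρ* that minimizes the constrained search at ρ*, i.e., ⟨Ψ, WΨ⟩ ≥ ⟨Φ, WΦ⟩ for every unit vector Ψ with ι*(|Ψ⟩⟨Ψ|) = ρ*. Let δ be a weight vector (a nonzero element of some weight space H_ω) with ⟨δ, Φ⟩ = 0. Then ⟨δ, WΦ⟩ = 0. -/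
open Filter Topology

noncomputable section

variable {V H : Type*}
  [AddCommGroup V] [Module ℝ V]
  [NormedAddCommGroup H] [InnerProductSpace ℂ H]

/-!
Suppose `⟨δ, WΦ⟩ ≠ 0`; rescaling `δ` gives a unit `u ∈ H_α` with `u ⊥ Φ` and `Re⟨u, WΦ⟩ < 0`.
As `ρ₀` is a relative interior point, `ρ₀ = ∑ p_ω ω` with `p_α > 0`. Vectors `y_ω ∈ H_ω` are
mutually orthogonal and every `ι v` acts on `y_ω` as the scalar `ω v`, so adding `∑ y_ω` to `Φ`
adds `∑ m_ω` to `‖Φ‖²` and `∑ m_ω • ω` to the density, where `m_ω = 2 Re⟨Φ, y_ω⟩ + ‖y_ω‖²`.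
With `m_ω = ε² p_ω` the normalized vector again has density `ρ₀`. Take `y_α = ε √p_α u`, and for
`ω ≠ α` a nonnegative multiple of a unit vector `u_ω ∈ H_ω` with `Re⟨Φ, u_ω⟩ > 0` (then
`y_ω = O(ε²)`) or with `Re⟨Φ, u_ω⟩ = 0` and `Re⟨u_ω, WΦ⟩ ≤ 0`. The energy then drops by
`2 ε √p_α |Re⟨u, WΦ⟩|` at first order, while everything else is `O(ε²)`: for small `ε` this
contradicts the minimality of `Φ`.
-/

theorem expectation_add_s13 {T : H →ₗ[ℂ] H} (hT : T.IsSymmetric) (x y : H) :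
    expectation T (x + y) = expectation T x + 2 * (inner ℂ y (T x)).re + expectation T y := by
  have h : inner ℂ x (T y) = starRingEnd ℂ (inner ℂ y (T x)) := by
    rw [← hT, inner_conj_symm]
  simp only [expectation, map_add, inner_add_left, inner_add_right, Complex.add_re, h,
    Complex.conj_re]
  ring

theorem expectation_ofReal_smul (T : H →ₗ[ℂ] H) (r : ℝ) (x : H) :
    expectation T ((r : ℂ) • x) = r ^ 2 * expectation T x := by
  simp only [expectation, map_smul, inner_smul_left, inner_smul_right, Complex.conj_ofReal,
    ← mul_assoc, ← Complex.ofReal_mul, Complex.re_ofReal_mul, sq]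

theorem expectation_id (x : H) : expectation LinearMap.id x = ‖x‖ ^ 2 :=
  inner_self_eq_norm_sq (𝕜 := ℂ) x

theorem pureDensity_ofReal_smul (ι : V →ₗ[ℝ] (H →ₗ[ℂ] H)) (r : ℝ) (x : H) :
    pureDensity ι ((r : ℂ) • x) = r ^ 2 • pureDensity ι x :=
  LinearMap.ext fun v => expectation_ofReal_smul (ι v) r x

theorem expectation_add_sum_of_orthogonal_eigenvectors {κ : Type*} {T : H →ₗ[ℂ] H} (hT : T.IsSymmetric)
    {s : Finset κ} {y : κ → H} {c : κ → ℝ}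
    (horth : ∀ i ∈ s, ∀ j ∈ s, i ≠ j → inner ℂ (y i) (y j) = 0)
    (hc : ∀ i ∈ s, T (y i) = (c i : ℂ) • y i) (x : H) :
    expectation T (x + ∑ i ∈ s, y i) =
      expectation T x + ∑ i ∈ s, c i * (2 * (inner ℂ x (y i)).re + ‖y i‖ ^ 2) := by
  have hcross : (inner ℂ (∑ i ∈ s, y i) (T x)).re = ∑ i ∈ s, c i * (inner ℂ x (y i)).re := by
    rw [sum_inner, Complex.re_sum]
    refine Finset.sum_congr rfl fun i hi => ?_
    rw [← hT, hc i hi, inner_smul_left, Complex.conj_ofReal, Complex.re_ofReal_mul]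
    simpa using congrArg (c i * ·) (inner_re_symm (𝕜 := ℂ) (y i) x)
  have hquad : expectation T (∑ i ∈ s, y i) = ∑ i ∈ s, c i * ‖y i‖ ^ 2 := by
    simp only [expectation, map_sum, inner_sum, Complex.re_sum]
    refine Finset.sum_congr rfl fun i hi => ?_
    rw [hc i hi, inner_smul_right, Complex.re_ofReal_mul, sum_inner,
      Finset.sum_eq_single_of_mem i hi fun j hj hji => horth j hj i hi hji]
    congr 1
    exact inner_self_eq_norm_sq (𝕜 := ℂ) (y i)
  rw [expectation_add_s13 hT, hcross, hquad, Finset.mul_sum, add_assoc, ← Finset.sum_add_distrib]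
  congr 1
  exact Finset.sum_congr rfl fun i _ => by ring

theorem exists_expectation_add_le [FiniteDimensional ℂ H] {T : H →ₗ[ℂ] H}
    (hT : T.IsSymmetric) :
    ∃ M, 0 ≤ M ∧ ∀ x y : H,
      expectation T (x + y) ≤ expectation T x + 2 * (inner ℂ y (T x)).re + M * ‖y‖ ^ 2 := by
  refine ⟨‖LinearMap.toContinuousLinearMap T‖, norm_nonneg _, fun x y => ?_⟩
  have hy : expectation T y ≤ ‖y‖ * ‖T y‖ :=
    (Complex.re_le_norm _).trans (norm_inner_le_norm _ _)
  have hTy : ‖T y‖ ≤ ‖LinearMap.toContinuousLinearMap T‖ * ‖y‖ :=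
    (LinearMap.toContinuousLinearMap T).le_opNorm y
  rw [expectation_add_s13 hT]
  nlinarith [norm_nonneg y]

theorem exists_sign_mul_nonneg (a b : ℝ) :
    ∃ σ C : ℝ, |σ| = 1 ∧ 0 ≤ C ∧ 0 ≤ σ * a ∧ σ * b ≤ C * (σ * a) := by
  rcases lt_trichotomy a 0 with ha | rfl | ha
  · refine ⟨-1, |b| / -a, by norm_num, div_nonneg (abs_nonneg b) (by linarith), by linarith, ?_⟩
    rw [neg_one_mul, neg_one_mul, div_mul_cancel₀ _ (by linarith)]
    exact neg_le_abs b
  · rcases le_total b 0 with hb | hb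
    · exact ⟨1, 0, by norm_num, le_rfl, by simp, by simpa using hb⟩
    · exact ⟨-1, 0, by norm_num, le_rfl, by simp, by simpa using hb⟩
  · refine ⟨1, |b| / a, by norm_num, by positivity, by linarith, ?_⟩
    rw [one_mul, one_mul, div_mul_cancel₀ _ ha.ne']
    exact le_abs_self b

theorem nonpos_of_forall_pos_mul_le_mul_sq {a b : ℝ} (h : ∀ ε > 0, a * ε ≤ b * ε ^ 2) :
    a ≤ 0 := by
  by_contra! ha
  have hε : 0 < a / (|b| + 1) := by positivity
  have h1 := h _ hε
  have h2 : a ≤ b * (a / (|b| + 1)) := by nlinarith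
  have h3 : b * (a / (|b| + 1)) < a := by
    rw [mul_div_assoc', div_lt_iff₀ (by positivity)]
    nlinarith [le_abs_self b]
  linarith

theorem exists_sum_smul_eq_of_isRelInterior {M : Type*} [AddCommGroup M] [Module ℝ M]
    {s : Set M} {ρ α : M} (hρ : IsRelInterior (convexHull ℝ s) ρ) (hα : α ∈ s) :
    ∃ (S : Finset M) (p : M → ℝ), ↑S ⊆ s ∧ α ∈ S ∧ 0 < p α ∧ (∀ ω ∈ S, 0 ≤ p ω) ∧
      ∑ ω ∈ S, p ω = 1 ∧ ∑ ω ∈ S, p ω • ω = ρ := by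
  classical
  obtain ⟨τ, hτ, t, ht0, ht1, rfl⟩ := hρ.2 α (subset_convexHull ℝ s hα)
  rw [convexHull_eq_union_convexHull_finite_subsets, Set.mem_iUnion₂] at hτ
  obtain ⟨S₀, hS₀, hτ⟩ := hτ
  obtain ⟨w, hw0, hw1, hwτ⟩ := Finset.mem_convexHull'.1
    (convexHull_mono (Finset.coe_subset.2 (Finset.subset_insert α S₀)) hτ)
  refine ⟨insert α S₀, fun ω => (if ω = α then t else 0) + (1 - t) * w ω,
    by simpa using Set.insert_subset hα hS₀, Finset.mem_insert_self α S₀,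
    by simp only [if_pos]; nlinarith [hw0 α (Finset.mem_insert_self α S₀)],
    fun ω hω => add_nonneg (by split_ifs <;> linarith) (by nlinarith [hw0 ω hω]), ?_, ?_⟩
  · simp [Finset.sum_add_distrib, ← Finset.mul_sum, hw1]
  · simp [Finset.sum_add_distrib, add_smul, mul_smul, ← Finset.smul_sum, hwτ, ite_smul]

theorem exists_unit_mem_re_inner_nonneg (K : Submodule ℂ H) (hK : K ≠ ⊥) (x g : H) :
    ∃ u ∈ K, ‖u‖ = 1 ∧ ∃ C, 0 ≤ C ∧ 0 ≤ (inner ℂ x u).re ∧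
      (inner ℂ u g).re ≤ C * (inner ℂ x u).re := by
  obtain ⟨v, hvK, hv0⟩ := Submodule.exists_mem_ne_zero_of_ne_bot hK
  obtain ⟨σ, C, hσ, hC, ha, hb⟩ := exists_sign_mul_nonneg
    (inner ℂ x (((‖v‖⁻¹ : ℝ) : ℂ) • v)).re (inner ℂ (((‖v‖⁻¹ : ℝ) : ℂ) • v) g).re
  refine ⟨((σ * ‖v‖⁻¹ : ℝ) : ℂ) • v, K.smul_mem _ hvK, ?_, C, hC, ?_, ?_⟩
  · rw [norm_smul, Complex.norm_real, Real.norm_eq_abs, abs_mul, hσ, abs_inv, abs_norm,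
      one_mul, inv_mul_cancel₀ (norm_ne_zero_iff.2 hv0)]
  all_goals
    simp only [inner_smul_left, inner_smul_right, Complex.conj_ofReal, Complex.re_ofReal_mul,
      mul_assoc] at ha hb ⊢
    assumption

theorem exists_mass_family (K : Submodule ℂ H) (hK : K ≠ ⊥) (x g : H) :
    ∃ C, 0 ≤ C ∧ ∀ q, 0 ≤ q → ∃ y ∈ K, 2 * (inner ℂ x y).re + ‖y‖ ^ 2 = q ∧ ‖y‖ ^ 2 ≤ q ∧
      2 * (inner ℂ y g).re ≤ C * q := by
  obtain ⟨u, huK, hu, C, hC, ha, hb⟩ := exists_unit_mem_re_inner_nonneg K hK x g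
  refine ⟨C, hC, fun q hq => ?_⟩
  set a := (inner ℂ x u).re
  -- `√(a ^ 2 + q) - a` is the nonnegative root `l` of `2 a l + l ^ 2 = q`.
  have hs := Real.sq_sqrt (by positivity : 0 ≤ a ^ 2 + q)
  have hl0 : 0 ≤ √(a ^ 2 + q) - a :=
    sub_nonneg.2 (Real.le_sqrt_of_sq_le (by linarith))
  have hl : 2 * a * (√(a ^ 2 + q) - a) + (√(a ^ 2 + q) - a) ^ 2 = q := by
    linear_combination hs
  have hnorm : ‖((√(a ^ 2 + q) - a : ℝ) : ℂ) • u‖ = √(a ^ 2 + q) - a := by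
    rw [norm_smul, hu, mul_one, Complex.norm_real, Real.norm_of_nonneg hl0]
  refine ⟨((√(a ^ 2 + q) - a : ℝ) : ℂ) • u, K.smul_mem _ huK, ?_, ?_, ?_⟩
  · rw [hnorm, inner_smul_right, Complex.re_ofReal_mul]
    linarith
  · rw [hnorm]
    nlinarith
  · rw [inner_smul_left, Complex.conj_ofReal, Complex.re_ofReal_mul]
    nlinarith [mul_le_mul_of_nonneg_left hb hl0]

theorem exists_norm_smul_eq_one_re_inner_neg {δ g : H} (h : inner ℂ δ g ≠ 0) :
    ∃ z : ℂ, ‖z • δ‖ = 1 ∧ (inner ℂ (z • δ) g).re < 0 := by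
  have hδ : 0 < ‖δ‖ := norm_pos_iff.2 fun hδ => h (by rw [hδ, inner_zero_left])
  have hc : 0 < ‖inner ℂ δ g‖ := norm_pos_iff.2 h
  refine ⟨-(((‖inner ℂ δ g‖ * ‖δ‖)⁻¹ : ℝ) : ℂ) * inner ℂ δ g, ?_, ?_⟩
  · rw [norm_smul, norm_mul, norm_neg, Complex.norm_real, Real.norm_of_nonneg (by positivity)]
    field_simp
  · rw [inner_smul_left, map_mul, map_neg, Complex.conj_ofReal, neg_mul, neg_mul, mul_assoc,
      Complex.conj_mul', Complex.neg_re, ← Complex.ofReal_pow, ← Complex.ofReal_mul,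
      Complex.ofReal_re, neg_neg_iff_pos]
    positivity

theorem inner_eq_zero_of_mem_weightSpace {ι : V →ₗ[ℝ] (H →ₗ[ℂ] H)}
    (hι : ∀ v, (ι v).IsSymmetric) {α β : Module.Dual ℝ V} (hne : α ≠ β) {x y : H}
    (hx : x ∈ weightSpace ι α) (hy : y ∈ weightSpace ι β) : inner ℂ x y = 0 := by
  obtain ⟨v, hv⟩ : ∃ v, α v ≠ β v := not_forall.1 fun h => hne (LinearMap.ext h)
  have h := hι v x y
  rw [hx v, hy v, inner_smul_left, inner_smul_right, Complex.conj_ofReal] at h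
  exact (mul_eq_mul_right_iff.1 h).resolve_left (by exact_mod_cast hv)

theorem pureDensity_add_sum {ι : V →ₗ[ℝ] (H →ₗ[ℂ] H)} (hι : ∀ v, (ι v).IsSymmetric)
    {S : Finset (Module.Dual ℝ V)} {y : Module.Dual ℝ V → H}
    (hy : ∀ ω ∈ S, y ω ∈ weightSpace ι ω) (x : H) :
    pureDensity ι (x + ∑ ω ∈ S, y ω) =
      pureDensity ι x + ∑ ω ∈ S, (2 * (inner ℂ x (y ω)).re + ‖y ω‖ ^ 2) • ω := by
  ext v
  refine (expectation_add_sum_of_orthogonal_eigenvectors (hι v)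
    (fun i hi j hj hij => inner_eq_zero_of_mem_weightSpace hι hij (hy i hi) (hy j hj))
    (fun ω hω => hy ω hω v) x).trans ?_
  simp only [LinearMap.add_apply, LinearMap.coe_sum, LinearMap.coe_smul, Finset.sum_apply,
    Pi.smul_apply, smul_eq_mul]
  exact congrArg _ (Finset.sum_congr rfl fun ω _ => mul_comm _ _)

theorem norm_add_sum_sq {ι : V →ₗ[ℝ] (H →ₗ[ℂ] H)} (hι : ∀ v, (ι v).IsSymmetric)
    {S : Finset (Module.Dual ℝ V)} {y : Module.Dual ℝ V → H}
    (hy : ∀ ω ∈ S, y ω ∈ weightSpace ι ω) (x : H) :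
    ‖x + ∑ ω ∈ S, y ω‖ ^ 2 = ‖x‖ ^ 2 + ∑ ω ∈ S, (2 * (inner ℂ x (y ω)).re + ‖y ω‖ ^ 2) := by
  simpa [expectation_id] using expectation_add_sum_of_orthogonal_eigenvectors (c := fun _ => 1)
    (T := LinearMap.id) (fun _ _ => rfl)
    (fun i hi j hj hij => inner_eq_zero_of_mem_weightSpace hι hij (hy i hi) (hy j hj))
    (fun _ _ => by simp) x

theorem mul_le_expectation_of_pureDensity_eq_smul {ι : V →ₗ[ℝ] (H →ₗ[ℂ] H)}
    {W : H →ₗ[ℂ] H} {ρ₀ : Module.Dual ℝ V} {Φ : H}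
    (hmin : ∀ Ψ : H, ‖Ψ‖ = 1 → pureDensity ι Ψ = ρ₀ → expectation W Φ ≤ expectation W Ψ)
    {Ψ : H} (hΨ : Ψ ≠ 0) (hρ : pureDensity ι Ψ = ‖Ψ‖ ^ 2 • ρ₀) :
    ‖Ψ‖ ^ 2 * expectation W Φ ≤ expectation W Ψ := by
  have hn : ‖Ψ‖ ≠ 0 := norm_ne_zero_iff.2 hΨ
  have h := hmin (((‖Ψ‖⁻¹ : ℝ) : ℂ) • Ψ)
    (by rw [norm_smul, Complex.norm_real, norm_inv, norm_norm, inv_mul_cancel₀ hn])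
    (by rw [pureDensity_ofReal_smul, hρ, smul_smul, inv_pow, inv_mul_cancel₀ (pow_ne_zero 2 hn),
      one_smul])
  rwa [expectation_ofReal_smul, inv_pow, le_inv_mul_iff₀ (by positivity)] at h

theorem mul_le_expectation_add_sum {ι : V →ₗ[ℝ] (H →ₗ[ℂ] H)} (hι : ∀ v, (ι v).IsSymmetric)
    {W : H →ₗ[ℂ] H} {ρ₀ : Module.Dual ℝ V} {Φ : H}
    (hmin : ∀ Ψ : H, ‖Ψ‖ = 1 → pureDensity ι Ψ = ρ₀ → expectation W Φ ≤ expectation W Ψ)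
    (hΦ : ‖Φ‖ = 1) (hΦρ : pureDensity ι Φ = ρ₀)
    {S : Finset (Module.Dual ℝ V)} {p : Module.Dual ℝ V → ℝ}
    (hp1 : ∑ ω ∈ S, p ω = 1) (hpρ : ∑ ω ∈ S, p ω • ω = ρ₀) {s : ℝ} (hs : 0 ≤ s)
    {y : Module.Dual ℝ V → H} (hy : ∀ ω ∈ S, y ω ∈ weightSpace ι ω)
    (hmass : ∀ ω ∈ S, 2 * (inner ℂ Φ (y ω)).re + ‖y ω‖ ^ 2 = s * p ω) :
    (1 + s) * expectation W Φ ≤ expectation W (Φ + ∑ ω ∈ S, y ω) := by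
  have hnorm : ‖Φ + ∑ ω ∈ S, y ω‖ ^ 2 = 1 + s := by
    rw [norm_add_sum_sq hι hy, hΦ, Finset.sum_congr rfl hmass, ← Finset.mul_sum, hp1]
    ring
  refine hnorm ▸ mul_le_expectation_of_pureDensity_eq_smul hmin ?_ ?_
  · intro h
    rw [h, norm_zero] at hnorm
    linarith
  · rw [hnorm, pureDensity_add_sum hι hy, hΦρ, Finset.sum_congr rfl fun ω hω => by rw [hmass ω hω],
      add_smul, one_smul, ← hpρ, Finset.smul_sum]
    simp only [mul_smul]

theorem exists_weight_perturbation {ι : V →ₗ[ℝ] (H →ₗ[ℂ] H)} (hι : ∀ v, (ι v).IsSymmetric)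
    {S : Finset (Module.Dual ℝ V)} (hS : ↑S ⊆ weights ι) (x g : H) {α : Module.Dual ℝ V}
    (hα : α ∈ S) {u : H} (hu : u ∈ weightSpace ι α) (hu1 : ‖u‖ = 1) (hxu : inner ℂ x u = 0) :
    ∃ C : Module.Dual ℝ V → ℝ, ∀ q : Module.Dual ℝ V → ℝ, (∀ ω ∈ S, 0 ≤ q ω) →
      ∃ y : Module.Dual ℝ V → H, (∀ ω ∈ S, y ω ∈ weightSpace ι ω) ∧
        (∀ ω ∈ S, 2 * (inner ℂ x (y ω)).re + ‖y ω‖ ^ 2 = q ω) ∧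
        ‖∑ ω ∈ S, y ω‖ ^ 2 ≤ ∑ ω ∈ S, q ω ∧
        2 * (inner ℂ (∑ ω ∈ S, y ω) g).re ≤
          2 * √(q α) * (inner ℂ u g).re + ∑ ω ∈ S, C ω * q ω := by
  classical
  choose! C hC y hy using fun ω (hω : ω ∈ S) => exists_mass_family _ (hS hω) x g
  refine ⟨C, fun q hq => ?_⟩
  set yq := Function.update (fun ω => y ω (q ω)) α (((√(q α) : ℝ) : ℂ) • u)
  have hyα : yq α = ((√(q α) : ℝ) : ℂ) • u := Function.update_self _ _ _
  have hyne : ∀ ω ≠ α, yq ω = y ω (q ω) := fun ω h => Function.update_of_ne h _ _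
  have hyq : ∀ ω ∈ S, yq ω ∈ weightSpace ι ω ∧
      2 * (inner ℂ x (yq ω)).re + ‖yq ω‖ ^ 2 = q ω ∧ ‖yq ω‖ ^ 2 ≤ q ω := by
    intro ω hω
    rcases eq_or_ne ω α with rfl | hne
    · have hnorm : ‖yq ω‖ ^ 2 = q ω := by
        rw [hyα, norm_smul, hu1, mul_one, Complex.norm_real,
          Real.norm_of_nonneg (Real.sqrt_nonneg _), Real.sq_sqrt (hq ω hω)]
      refine ⟨hyα ▸ Submodule.smul_mem _ _ hu, ?_, hnorm.le⟩
      rw [hnorm, hyα, inner_smul_right, hxu, mul_zero, Complex.zero_re, mul_zero, zero_add]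
    · rw [hyne ω hne]
      exact ⟨(hy ω hω _ (hq ω hω)).1, (hy ω hω _ (hq ω hω)).2.1, (hy ω hω _ (hq ω hω)).2.2.1⟩
  refine ⟨yq, fun ω hω => (hyq ω hω).1, fun ω hω => (hyq ω hω).2.1, ?_, ?_⟩
  · calc ‖∑ ω ∈ S, yq ω‖ ^ 2 = ∑ ω ∈ S, ‖yq ω‖ ^ 2 := by
          simpa using norm_add_sum_sq hι (fun ω hω => (hyq ω hω).1) 0
      _ ≤ ∑ ω ∈ S, q ω := Finset.sum_le_sum fun ω hω => (hyq ω hω).2.2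
  · rw [sum_inner, Complex.re_sum, Finset.mul_sum, ← Finset.add_sum_erase S _ hα, hyα,
      inner_smul_left, Complex.conj_ofReal, Complex.re_ofReal_mul, ← mul_assoc]
    refine add_le_add_right ((Finset.sum_le_sum fun ω hω => ?_).trans
      (Finset.sum_le_sum_of_subset_of_nonneg (Finset.erase_subset α S)
        fun ω hω _ => mul_nonneg (hC ω hω) (hq ω hω))) _
    obtain ⟨hne, hωS⟩ := Finset.mem_erase.1 hω
    rw [hyne ω hne]
    exact (hy ω hωS _ (hq ω hωS)).2.2.2

theorem no_mixing_general [FiniteDimensional ℂ H]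
    (ι : V →ₗ[ℝ] (H →ₗ[ℂ] H)) (W : H →ₗ[ℂ] H)
    (hι : ∀ v : V, (ι v).IsSymmetric) (hW : W.IsSymmetric)
    (ρ₀ : Module.Dual ℝ V) (hρ₀ : IsRelInterior (convexHull ℝ (weights ι)) ρ₀)
    (Φ : H) (hΦ : ‖Φ‖ = 1) (hΦρ : pureDensity ι Φ = ρ₀)
    (hmin : ∀ Ψ : H, ‖Ψ‖ = 1 → pureDensity ι Ψ = ρ₀ → expectation W Φ ≤ expectation W Ψ)
    (δ : H) (α : Module.Dual ℝ V) (hδmem : δ ∈ weightSpace ι α)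
    (hperp : (inner ℂ δ Φ : ℂ) = 0) :
    (inner ℂ δ (W Φ) : ℂ) = 0 := by
  by_contra hc
  obtain ⟨z, hz1, hb⟩ := exists_norm_smul_eq_one_re_inner_neg hc
  have hα : α ∈ weights ι :=
    (Submodule.ne_bot_iff _).2 ⟨δ, hδmem, fun h => hc (by rw [h, inner_zero_left])⟩
  obtain ⟨S, p, hSΩ, hαS, hpα, hp0, hp1, hpρ⟩ := exists_sum_smul_eq_of_isRelInterior hρ₀ hα
  obtain ⟨C, hpert⟩ := exists_weight_perturbation hι hSΩ Φ (W Φ) hαS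
    (Submodule.smul_mem _ z hδmem) hz1
    (by rw [inner_smul_right, inner_eq_zero_symm.1 hperp, mul_zero])
  obtain ⟨M, hM0, hM⟩ := exists_expectation_add_le hW
  have hdescent : ∀ ε > 0, -2 * √(p α) * (inner ℂ (z • δ) (W Φ)).re * ε ≤
      (∑ ω ∈ S, C ω * p ω + M - expectation W Φ) * ε ^ 2 := by
    intro ε hε
    obtain ⟨y, hyK, hym, hyn, hyg⟩ :=
      hpert (fun ω => ε ^ 2 * p ω) fun ω hω => mul_nonneg (sq_nonneg ε) (hp0 ω hω)
    have hlow := mul_le_expectation_add_sum hι hmin hΦ hΦρ hp1 hpρ (sq_nonneg ε) hyK hym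
    have hup := hM Φ (∑ ω ∈ S, y ω)
    have hCp : ∑ ω ∈ S, C ω * (ε ^ 2 * p ω) = ε ^ 2 * ∑ ω ∈ S, C ω * p ω := by
      rw [Finset.mul_sum]
      exact Finset.sum_congr rfl fun _ _ => by ring
    rw [← Finset.mul_sum, hp1, mul_one] at hyn
    rw [hCp, Real.sqrt_mul (sq_nonneg ε), Real.sqrt_sq hε.le] at hyg
    nlinarith
  have hnonpos := nonpos_of_forall_pos_mul_le_mul_sq hdescent
  nlinarith [Real.sqrt_pos.2 hpα]

/-- the No-Mixing Lemma. -/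
theorem no_mixing [FiniteDimensional ℝ V] [FiniteDimensional ℂ H] [Nontrivial H]
    (ι : V →ₗ[ℝ] (H →ₗ[ℂ] H)) (W : H →ₗ[ℂ] H)
    (hι : ∀ v : V, (ι v).IsSymmetric) (hW : W.IsSymmetric)
    (habel : ∀ v w : V, ι v ∘ₗ ι w = ι w ∘ₗ ι v)
    (ρ₀ : Module.Dual ℝ V) (hρ₀ : IsRelInterior (convexHull ℝ (weights ι)) ρ₀)
    (Φ : H) (hΦ : ‖Φ‖ = 1) (hΦρ : pureDensity ι Φ = ρ₀)
    (hmin : ∀ Ψ : H, ‖Ψ‖ = 1 → pureDensity ι Ψ = ρ₀ → expectation W Φ ≤ expectation W Ψ)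
    (δ : H) (α : Module.Dual ℝ V) (hδmem : δ ∈ weightSpace ι α) (hδ0 : δ ≠ 0)
    (hperp : (inner ℂ δ Φ : ℂ) = 0) :
    (inner ℂ δ (W Φ) : ℂ) = 0 :=
  no_mixing_general ι W hι hW ρ₀ hρ₀ Φ hΦ hΦρ hmin δ α hδmem hperp

end
end

section
/- (Characterization of critical values in abelian functional theories.) Let the theory be abelian and let ρ ∈ conv(Ω) be a representable density, and let d denote the dimension of the affine span of Ω. Then the following are equivalent: (i) there exists a unit vector Ψ with ι*(|Ψ⟩⟨Ψ|) = ρ such that the real-linear map from { φ ∈ H : ⟨φ, Ψ⟩ = 0 } to V* sending φ to the functional v ↦ 2 Re⟨φ, ι(v)Ψ⟩ does not have image equal to the direction space of the affine span of Ω; (ii) there exists a subset Ω' ⊆ Ω with at most d elements such that ρ lies in the convex hull of Ω'. -/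
open Filter Topology

noncomputable section

variable {V H : Type*}
  [AddCommGroup V] [Module ℝ V]
  [NormedAddCommGroup H] [InnerProductSpace ℂ H]

/-! Since the potentials commute and are symmetric, `H` is the orthogonal sum of the weight spaces
`H_α`; write `P_α` for the orthogonal projections. The density of a unit vector `ψ` is then the
convex combination `∑ ‖P_α ψ‖² α`, and the derivative `φ ↦ ∑ 2 Re⟨φ, P_α ψ⟩ α` maps `ψ^⊥` onto
exactly the vector span of the support `{α | P_α ψ ≠ 0}`: coefficient sums vanish because
`⟨φ, ψ⟩ = 0`, and `P_α ψ / (2‖P_α ψ‖²) - P_β ψ / (2‖P_β ψ‖²)` is sent to `α - β`.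
So `ψ` is critical exactly when its support spans an affine space of dimension `< d`, and then
Carathéodory writes `ρ` as a convex combination of at most `d` weights of the support.
Conversely, for `ρ = ∑_{α ∈ s} w_α α` the vector `∑ √w_α e_α`, with unit vectors `e_α ∈ H_α`,
has density `ρ` and support inside `s`, whose affine dimension is at most `|s| - 1 < d`. -/

section Convexity

variable {k E : Type*} [Field k] [AddCommGroup E] [Module k E]

theorem sum_smul_mem_vectorSpan {S : Set E} {s : Finset E} {c : E → k}
    (hc : ∑ x ∈ s, c x = 0) (hS : ∀ x ∈ s, c x ≠ 0 → x ∈ S) :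
    ∑ x ∈ s, c x • x ∈ vectorSpan k S := by
  rcases S.eq_empty_or_nonempty with rfl | ⟨x₀, hx₀⟩
  · rw [Finset.sum_eq_zero fun x hx => by
      rw [not_not.mp (mt (hS x hx) (Set.notMem_empty x)), zero_smul]]
    exact zero_mem _
  have hshift : ∑ x ∈ s, c x • x = ∑ x ∈ s, c x • (x -ᵥ x₀) := by
    simp only [vsub_eq_sub, smul_sub, Finset.sum_sub_distrib, ← Finset.sum_smul, hc, zero_smul,
      sub_zero]
  rw [hshift]
  refine Submodule.sum_mem _ fun x hx => ?_
  by_cases hcx : c x = 0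
  · rw [hcx, zero_smul]
    exact zero_mem _
  · exact Submodule.smul_mem _ _ (vsub_mem_vectorSpan k (hS x hx hcx) hx₀)

theorem Finset.finrank_vectorSpan_lt_card {s : Finset E} (hs : s.Nonempty) :
    Module.finrank k (vectorSpan k (s : Set E)) < s.card := by
  have : Nonempty s := hs.to_subtype
  have h : Module.finrank k (vectorSpan k (s : Set E)) + 1 ≤ s.card := by
    convert finrank_vectorSpan_range_add_one_le k ((↑) : s → E) <;> simp
  omega

theorem exists_finset_card_le_finrank_vectorSpan_add_one [LinearOrder k] [IsStrictOrderedRing k]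
    {S : Set E} [FiniteDimensional k (vectorSpan k S)] {x : E} (hx : x ∈ convexHull k S) :
    ∃ t : Finset E, ↑t ⊆ S ∧ t.card ≤ Module.finrank k (vectorSpan k S) + 1 ∧
      x ∈ convexHull k (t : Set E) := by
  rw [convexHull_eq_union] at hx
  simp only [Set.mem_iUnion] at hx
  obtain ⟨t, htS, hind, hxt⟩ := hx
  have : Nonempty t := (convexHull_nonempty_iff.mp ⟨x, hxt⟩).to_subtype
  have hcard : Module.finrank k (vectorSpan k (t : Set E)) + 1 = t.card := by
    convert hind.finrank_vectorSpan_add_one <;> simp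
  exact ⟨t, htS, hcard ▸ Nat.add_le_add_right (Submodule.finrank_mono (vectorSpan_mono k htS)) 1,
    hxt⟩

end Convexity

theorem Submodule.inner_starProjection_self {𝕜 E : Type*} [RCLike 𝕜] [NormedAddCommGroup E]
    [InnerProductSpace 𝕜 E] (K : Submodule 𝕜 E) [K.HasOrthogonalProjection] (x : E) :
    inner 𝕜 (K.starProjection x) x = ((‖K.starProjection x‖ ^ 2 : ℝ) : 𝕜) := by
  conv_lhs => rw [← K.starProjection_eq_self_iff.mpr (K.starProjection_apply_mem x),
    K.inner_starProjection_left_eq_right]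
  rw [inner_self_eq_norm_sq_to_K, RCLike.ofReal_pow]

namespace FunctionalTheory

variable {ι : V →ₗ[ℝ] (H →ₗ[ℂ] H)}

theorem mem_weightSpace {α : Module.Dual ℝ V} {ψ : H} :
    ψ ∈ weightSpace ι α ↔ ∀ v, ι v ψ = (α v : ℂ) • ψ :=
  Iff.rfl

theorem weightSpace_eq_iInf_eigenspace (α : Module.Dual ℝ V) :
    weightSpace ι α = ⨅ v, Module.End.eigenspace (ι v) (α v) := by
  ext ψ
  simp only [mem_weightSpace, Submodule.mem_iInf, Module.End.mem_eigenspace_iff]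

theorem orthogonalFamily_weightSpace (hι : ∀ v, (ι v).IsSymmetric) :
    OrthogonalFamily ℂ (fun α => weightSpace ι α) fun α => (weightSpace ι α).subtypeₗᵢ := by
  intro α β hαβ x y
  have hinj : Function.Injective fun (α : Module.Dual ℝ V) (v : V) => (α v : ℂ) :=
    fun α β h => LinearMap.ext fun v => Complex.ofReal_injective (congrFun h v)
  exact LinearMap.IsSymmetric.orthogonalFamily_iInf_eigenspaces (T := fun v => ι v) hι
    (hinj.ne hαβ) ⟨x, weightSpace_eq_iInf_eigenspace (ι := ι) α ▸ x.2⟩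
    ⟨y, weightSpace_eq_iInf_eigenspace (ι := ι) β ▸ y.2⟩

theorem weightSpace_le_orthogonal (hι : ∀ v, (ι v).IsSymmetric) {α β : Module.Dual ℝ V}
    (hαβ : α ≠ β) : weightSpace ι α ≤ (weightSpace ι β)ᗮ :=
  Submodule.isOrtho_iff_le.mp ((orthogonalFamily_weightSpace hι).isOrtho hαβ)

theorem iInf_eigenspace_le_weightSpace_pureDensity (hι : ∀ v, (ι v).IsSymmetric) {χ : V → ℂ}
    {u : H} (hu : ‖u‖ = 1) (hχ : u ∈ ⨅ v, Module.End.eigenspace (ι v) (χ v)) :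
    ⨅ v, Module.End.eigenspace (ι v) (χ v) ≤ weightSpace ι (pureDensity ι u) := by
  intro ψ hψ v
  have hχv : χ v = pureDensity ι u v := by
    have hu' : ι v u = χ v • u :=
      Module.End.mem_eigenspace_iff.mp ((Submodule.mem_iInf _).mp hχ v)
    have hinner : inner ℂ (ι v u) u = χ v := by
      rw [hι v, hu', inner_smul_right, inner_self_eq_norm_sq_to_K, hu]
      simp
    rw [← hinner, ← (hι v).coe_re_inner_apply_self u, hι v]
    rfl
  rw [← hχv]
  exact Module.End.mem_eigenspace_iff.mp ((Submodule.mem_iInf _).mp hψ v)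

theorem derivDensity_of_mem_weightSpace (hι : ∀ v, (ι v).IsSymmetric) {α : Module.Dual ℝ V}
    {x : H} (hx : x ∈ weightSpace ι α) (ψ : H) :
    derivDensity ι ψ x = (2 * (inner ℂ x ψ).re) • α := by
  ext v
  change 2 * (inner ℂ x (ι v ψ)).re = _
  rw [← hι v, hx v, inner_smul_left, Complex.conj_ofReal, Complex.re_ofReal_mul]
  simp only [LinearMap.smul_apply, smul_eq_mul]
  ring

variable (ι) in
def derivDensityₗ (ψ : H) : H →ₗ[ℝ] Module.Dual ℝ V where
  toFun := derivDensity ι ψ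
  map_add' φ φ' := by
    ext v
    simp only [derivDensity, LinearMap.coe_mk, AddHom.coe_mk, LinearMap.add_apply, inner_add_left,
      Complex.add_re]
    ring
  map_smul' c φ := by
    ext v
    simp only [derivDensity, LinearMap.coe_mk, AddHom.coe_mk, LinearMap.smul_apply,
      RingHom.id_apply, smul_eq_mul]
    rw [← algebraMap_smul ℂ c φ, inner_smul_left, Complex.coe_algebraMap, Complex.conj_ofReal,
      Complex.re_ofReal_mul]
    ring

variable [FiniteDimensional ℂ H]

theorem weights_finite (hι : ∀ v, (ι v).IsSymmetric) : (weights ι).Finite :=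
  Submodule.finite_ne_bot_of_iSupIndep (orthogonalFamily_weightSpace hι).independent

theorem iSup_weightSpace_eq_top (hι : ∀ v, (ι v).IsSymmetric)
    (habel : ∀ v w, ι v ∘ₗ ι w = ι w ∘ₗ ι v) : ⨆ α, weightSpace ι α = ⊤ := by
  rw [eq_top_iff, ← LinearMap.IsSymmetric.iSup_iInf_eq_top_of_commute hι fun v w _ => habel v w]
  refine iSup_le fun χ => ?_
  by_cases h : ⨅ v, Module.End.eigenspace (ι v) (χ v) = ⊥
  · exact h ▸ bot_le
  · obtain ⟨u, hu, hu0⟩ := Submodule.exists_mem_ne_zero_of_ne_bot h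
    exact (iInf_eigenspace_le_weightSpace_pureDensity hι (norm_smul_inv_norm hu0)
      (Submodule.smul_mem _ _ hu)).trans (le_iSup _ _)

variable (ι) in
def weightSupport (ψ : H) : Set (Module.Dual ℝ V) :=
  Function.support fun α => (weightSpace ι α).starProjection ψ

theorem weightSupport_subset_weights {ψ : H} : weightSupport ι ψ ⊆ weights ι :=
  fun α hα => (Submodule.ne_bot_iff _).mpr ⟨_, (weightSpace ι α).starProjection_apply_mem ψ, hα⟩

variable (hι : ∀ v, (ι v).IsSymmetric)
include hι

theorem weightSupport_finite (ψ : H) : (weightSupport ι ψ).Finite :=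
  (weights_finite hι).subset weightSupport_subset_weights

theorem starProjection_weightSpace_eq_zero {α β : Module.Dual ℝ V} (hαβ : α ≠ β) {x : H}
    (hx : x ∈ weightSpace ι β) : (weightSpace ι α).starProjection x = 0 :=
  (Submodule.starProjection_apply_eq_zero_iff _).mpr (weightSpace_le_orthogonal hι hαβ.symm hx)

theorem exists_inner_eq_half_derivDensity_eq {ψ : H} {α : Module.Dual ℝ V}
    (hα : α ∈ weightSupport ι ψ) : ∃ u : H, inner ℂ u ψ = 1 / 2 ∧ derivDensity ι ψ u = α := by
  set p := ‖(weightSpace ι α).starProjection ψ‖ ^ 2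
  have hp : (2 * p)⁻¹ * p = 1 / 2 := by
    have : p ≠ 0 := pow_ne_zero 2 (norm_ne_zero_iff.mpr hα)
    field_simp
  have hu : inner ℂ ((((2 * p)⁻¹ : ℝ) : ℂ) • (weightSpace ι α).starProjection ψ) ψ = 1 / 2 := by
    rw [inner_smul_left, Submodule.inner_starProjection_self, Complex.conj_ofReal,
      RCLike.ofReal_eq_complex_ofReal, ← Complex.ofReal_mul, hp]
    norm_num
  refine ⟨_, hu, ?_⟩
  rw [derivDensity_of_mem_weightSpace hι (Submodule.smul_mem _ _
    ((weightSpace ι α).starProjection_apply_mem ψ)), hu]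
  norm_num

theorem starProjection_weightSpace_sum_smul [DecidableEq (Module.Dual ℝ V)]
    {t : Finset (Module.Dual ℝ V)} {e : Module.Dual ℝ V → H} (he : ∀ α ∈ t, e α ∈ weightSpace ι α)
    (c : Module.Dual ℝ V → ℂ) (β : Module.Dual ℝ V) :
    (weightSpace ι β).starProjection (∑ α ∈ t, c α • e α) = if β ∈ t then c β • e β else 0 := by
  have hterm : ∀ α ∈ t, (weightSpace ι β).starProjection (c α • e α) =
      if α = β then c α • e α else 0 := fun α hα => by
    split_ifs with hαβ
    · subst hαβ
      exact Submodule.starProjection_eq_self_iff.mpr (Submodule.smul_mem _ _ (he α hα))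
    · rw [map_smul, starProjection_weightSpace_eq_zero hι (Ne.symm hαβ) (he α hα), smul_zero]
  rw [map_sum, Finset.sum_congr rfl hterm, Finset.sum_ite_eq']

variable (habel : ∀ v w, ι v ∘ₗ ι w = ι w ∘ₗ ι v)
include habel

theorem finsum_starProjection_weightSpace (ψ : H) :
    ∑ᶠ α, (weightSpace ι α).starProjection ψ = ψ := by
  have hΩ := weights_finite hι
  rw [finsum_eq_sum_of_support_subset _ (weightSupport_subset_weights.trans hΩ.coe_toFinset.ge),
    ← Finset.sum_coe_sort]
  have hmem : ψ ∈ ⨆ α : hΩ.toFinset, weightSpace ι α := by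
    refine (eq_top_iff.mp (iSup_weightSpace_eq_top hι habel)).trans (iSup_le fun α => ?_)
      Submodule.mem_top
    by_cases hα : α ∈ weights ι
    · exact le_iSup_of_le ⟨α, hΩ.mem_toFinset.mpr hα⟩ le_rfl
    · exact (not_not.mp hα).symm ▸ bot_le
  exact ((orthogonalFamily_weightSpace hι).comp Subtype.val_injective).sum_projection_of_mem_iSup
    ψ hmem

section Decomposition

variable {s : Finset (Module.Dual ℝ V)} {ψ : H} (hs : weightSupport ι ψ ⊆ s)
include hs

theorem sum_starProjection_weightSpace : ∑ α ∈ s, (weightSpace ι α).starProjection ψ = ψ :=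
  (finsum_eq_sum_of_support_subset _ hs).symm.trans (finsum_starProjection_weightSpace hι habel ψ)

theorem apply_eq_sum_smul_starProjection (v : V) :
    ι v ψ = ∑ α ∈ s, (α v : ℂ) • (weightSpace ι α).starProjection ψ := by
  conv_lhs => rw [← sum_starProjection_weightSpace hι habel hs]
  rw [map_sum]
  exact Finset.sum_congr rfl fun α _ => (weightSpace ι α).starProjection_apply_mem ψ v

theorem norm_sq_eq_sum : ‖ψ‖ ^ 2 = ∑ α ∈ s, ‖(weightSpace ι α).starProjection ψ‖ ^ 2 := by
  conv_lhs => rw [← sum_starProjection_weightSpace hι habel hs]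
  exact (orthogonalFamily_weightSpace hι).norm_sum
    (fun α => (weightSpace ι α).orthogonalProjectionOnto ψ) s

theorem pureDensity_eq_sum :
    pureDensity ι ψ = ∑ α ∈ s, ‖(weightSpace ι α).starProjection ψ‖ ^ 2 • α := by
  ext v
  change (inner ℂ ψ (ι v ψ)).re = _
  rw [apply_eq_sum_smul_starProjection hι habel hs, inner_sum, Complex.re_sum,
    LinearMap.sum_apply]
  refine Finset.sum_congr rfl fun α _ => ?_
  rw [inner_smul_right, ← Submodule.inner_starProjection_left_eq_right,
    Submodule.inner_starProjection_self, RCLike.ofReal_eq_complex_ofReal, Complex.re_ofReal_mul,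
    Complex.ofReal_re, LinearMap.smul_apply, smul_eq_mul, mul_comm]

theorem derivDensity_eq_sum (φ : H) :
    derivDensity ι ψ φ =
      ∑ α ∈ s, (2 * (inner ℂ φ ((weightSpace ι α).starProjection ψ)).re) • α := by
  ext v
  change 2 * (inner ℂ φ (ι v ψ)).re = _
  rw [apply_eq_sum_smul_starProjection hι habel hs, inner_sum, Complex.re_sum, Finset.mul_sum,
    LinearMap.sum_apply]
  refine Finset.sum_congr rfl fun α _ => ?_
  rw [inner_smul_right, Complex.re_ofReal_mul, LinearMap.smul_apply, smul_eq_mul]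
  ring

end Decomposition

theorem setOf_derivDensity_eq_vectorSpan (ψ : H) :
    {d | ∃ φ : H, inner ℂ φ ψ = 0 ∧ d = derivDensity ι ψ φ} =
      (vectorSpan ℝ (weightSupport ι ψ) : Set (Module.Dual ℝ V)) := by
  have himage : {d | ∃ φ : H, inner ℂ φ ψ = 0 ∧ d = derivDensity ι ψ φ} =
      (((ℂ ∙ ψ)ᗮ.restrictScalars ℝ).map (derivDensityₗ ι ψ) : Set (Module.Dual ℝ V)) := by
    ext d
    simp [Submodule.mem_orthogonal_singleton_iff_inner_left, derivDensityₗ, eq_comm]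
  rw [himage, SetLike.coe_set_eq]
  refine le_antisymm ?_ ?_
  · rintro _ ⟨φ, hφ, rfl⟩
    have hs := (weightSupport_finite hι ψ).coe_toFinset.ge
    rw [derivDensityₗ, LinearMap.coe_mk, AddHom.coe_mk, derivDensity_eq_sum hι habel hs]
    refine sum_smul_mem_vectorSpan ?_ fun α hα _ => (Set.Finite.mem_toFinset _).mp hα
    rw [← Finset.mul_sum, ← Complex.re_sum, ← inner_sum, sum_starProjection_weightSpace hι habel hs,
      Submodule.mem_orthogonal_singleton_iff_inner_left.mp hφ, Complex.zero_re, mul_zero]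
  · rw [vectorSpan_def, Submodule.span_le]
    rintro _ ⟨α, hα, β, hβ, rfl⟩
    obtain ⟨u, hu, hdu⟩ := exists_inner_eq_half_derivDensity_eq hι hα
    obtain ⟨u', hu', hdu'⟩ := exists_inner_eq_half_derivDensity_eq hι hβ
    refine ⟨u - u', ?_, ?_⟩
    · exact Submodule.mem_orthogonal_singleton_iff_inner_left.mpr (by
        rw [inner_sub_left, hu, hu', sub_self])
    · rw [map_sub]
      exact congrArg₂ (· - ·) hdu hdu'

theorem pureDensity_mem_convexHull_weightSupport {ψ : H} (hψ : ‖ψ‖ = 1) :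
    pureDensity ι ψ ∈ convexHull ℝ (weightSupport ι ψ) := by
  have hfin := weightSupport_finite hι ψ
  refine convexHull_mono hfin.coe_toFinset.subset (Finset.mem_convexHull'.mpr
    ⟨_, fun _ _ => sq_nonneg _, ?_, (pureDensity_eq_sum hι habel hfin.coe_toFinset.ge).symm⟩)
  rw [← norm_sq_eq_sum hι habel hfin.coe_toFinset.ge, hψ, one_pow]

theorem exists_pureDensity_eq_weightSupport_subset {t : Finset (Module.Dual ℝ V)}
    (ht : ↑t ⊆ weights ι) {ρ : Module.Dual ℝ V} (hρ : ρ ∈ convexHull ℝ (t : Set _)) :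
    ∃ ψ : H, ‖ψ‖ = 1 ∧ pureDensity ι ψ = ρ ∧ weightSupport ι ψ ⊆ t := by
  classical
  obtain ⟨w, hw0, hw1, hwρ⟩ := Finset.mem_convexHull'.mp hρ
  have hunit : ∀ α ∈ t, ∃ e ∈ weightSpace ι α, ‖e‖ = 1 := fun α hα => by
    obtain ⟨e, he, he0⟩ := Submodule.exists_mem_ne_zero_of_ne_bot (ht hα)
    exact ⟨_, Submodule.smul_mem _ _ he, norm_smul_inv_norm he0⟩
  choose! e he he1 using hunit
  set ψ := ∑ α ∈ t, (√(w α) : ℂ) • e α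
  have hproj := starProjection_weightSpace_sum_smul hι he (fun α => (√(w α) : ℂ))
  have hsupp : weightSupport ι ψ ⊆ t := fun β hβ => by
    by_contra hβt
    exact hβ ((hproj β).trans (if_neg hβt))
  have hnorm : ∀ β ∈ t, ‖(weightSpace ι β).starProjection ψ‖ ^ 2 = w β := fun β hβ => by
    rw [hproj, if_pos hβ, norm_smul, he1 β hβ, mul_one, Complex.norm_real, Real.norm_eq_abs,
      sq_abs, Real.sq_sqrt (hw0 β hβ)]
  refine ⟨ψ, ?_, ?_, hsupp⟩
  · rw [← pow_eq_one_iff_of_nonneg (norm_nonneg ψ) two_ne_zero, norm_sq_eq_sum hι habel hsupp,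
      Finset.sum_congr rfl hnorm, hw1]
  · rw [pureDensity_eq_sum hι habel hsupp, ← hwρ]
    exact Finset.sum_congr rfl fun β hβ => by rw [hnorm β hβ]

end FunctionalTheory

open FunctionalTheory

theorem abelian_critical_value_iff_general [FiniteDimensional ℂ H]
    (ι : V →ₗ[ℝ] (H →ₗ[ℂ] H))
    (hι : ∀ v : V, (ι v).IsSymmetric)
    (habel : ∀ v w : V, ι v ∘ₗ ι w = ι w ∘ₗ ι v)
    (ρ : Module.Dual ℝ V) :
    (∃ ψ : H, ‖ψ‖ = 1 ∧ pureDensity ι ψ = ρ ∧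
        {d : Module.Dual ℝ V | ∃ φ : H, (inner ℂ φ ψ : ℂ) = 0 ∧ d = derivDensity ι ψ φ}
          ≠ ↑(vectorSpan ℝ (weights ι)))
    ↔ ∃ s : Finset (Module.Dual ℝ V), ↑s ⊆ weights ι ∧
        s.card ≤ Module.finrank ℝ (vectorSpan ℝ (weights ι)) ∧
        ρ ∈ convexHull ℝ (s : Set (Module.Dual ℝ V)) := by
  have := finiteDimensional_vectorSpan_of_finite ℝ (weights_finite hι)
  simp_rw [setOf_derivDensity_eq_vectorSpan hι habel, ne_eq, SetLike.coe_set_eq]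
  constructor
  · rintro ⟨ψ, hψ, rfl, hne⟩
    have hlt := lt_of_le_of_ne (vectorSpan_mono ℝ weightSupport_subset_weights) hne
    have := finiteDimensional_vectorSpan_of_finite ℝ (weightSupport_finite hι ψ)
    obtain ⟨t, hts, hcard, hmem⟩ := exists_finset_card_le_finrank_vectorSpan_add_one
      (pureDensity_mem_convexHull_weightSupport hι habel hψ)
    exact ⟨t, hts.trans weightSupport_subset_weights,
      hcard.trans (Submodule.finrank_lt_finrank_of_lt hlt), hmem⟩
  · rintro ⟨t, htw, hcard, hρ⟩
    obtain ⟨ψ, hψ, rfl, hsupp⟩ := exists_pureDensity_eq_weightSupport_subset hι habel htw hρ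
    refine ⟨ψ, hψ, rfl, fun heq => ?_⟩
    have := finiteDimensional_vectorSpan_of_finite ℝ t.finite_toSet
    have hle : Module.finrank ℝ (vectorSpan ℝ (weights ι)) ≤
        Module.finrank ℝ (vectorSpan ℝ (t : Set (Module.Dual ℝ V))) :=
      heq ▸ Submodule.finrank_mono (vectorSpan_mono ℝ hsupp)
    have hlt := Finset.finrank_vectorSpan_lt_card (k := ℝ)
      (Finset.coe_nonempty.mp (convexHull_nonempty_iff.mp ⟨_, hρ⟩))
    omega

/-- characterization of critical values in abelian functional theories. -/
theorem abelian_critical_value_iff [FiniteDimensional ℝ V] [FiniteDimensional ℂ H] [Nontrivial H]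
    (ι : V →ₗ[ℝ] (H →ₗ[ℂ] H)) (W : H →ₗ[ℂ] H)
    (hι : ∀ v : V, (ι v).IsSymmetric) (hW : W.IsSymmetric)
    (habel : ∀ v w : V, ι v ∘ₗ ι w = ι w ∘ₗ ι v)
    (ρ : Module.Dual ℝ V) (hρ : ρ ∈ convexHull ℝ (weights ι)) :
    (∃ ψ : H, ‖ψ‖ = 1 ∧ pureDensity ι ψ = ρ ∧
        {d : Module.Dual ℝ V | ∃ φ : H, (inner ℂ φ ψ : ℂ) = 0 ∧ d = derivDensity ι ψ φ}
          ≠ ↑(vectorSpan ℝ (weights ι)))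
    ↔ ∃ s : Finset (Module.Dual ℝ V), ↑s ⊆ weights ι ∧
        s.card ≤ Module.finrank ℝ (vectorSpan ℝ (weights ι)) ∧
        ρ ∈ convexHull ℝ (s : Set (Module.Dual ℝ V)) :=
  abelian_critical_value_iff_general ι hι habel ρ
end
end
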